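/- Let Γ be a group and let H be an infinite virtually cyclic subgroup of Γ. Then the set N_Γ[H] = {g ∈ Γ : H ∩ gHg⁻¹ is infinite} is a subgroup of Γ containing H. -/

import Mathlib

/-- A group is virtually cyclic if it contains a cyclic subgroup of finite index. -/
def VirtuallyCyclic (G : Type*) [Group G] : Prop :=
  ∃ C : Subgroup G, IsCyclic C ∧ C.FiniteIndex

/-- The conjugate subgroup `gHg⁻¹`. -/
def conjSubgroup {Γ : Type*} [Group Γ] (g : Γ) (H : Subgroup Γ) : Subgroup Γ :=
  H.map (MulAut.conj g).toMonoidHom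

/-!
In a virtually cyclic group a subgroup has finite index exactly when it is infinite: an infinite
subgroup meets the cyclic subgroup of finite index in an infinite, hence finite-index, subgroup of
an infinite cyclic group. Since `gHg⁻¹ ≅ H` is again infinite and virtually cyclic,
`H ∩ gHg⁻¹` is infinite if and only if it has finite index in both `H` and `gHg⁻¹`, i.e. if and
only if `H` and `gHg⁻¹` are commensurable. So the set in question is the commensurator of `H`.
-/

open scoped Pointwise

theorem VirtuallyCyclic.of_mulEquiv {G G' : Type*} [Group G] [Group G'] (e : G ≃* G')
    (hG : VirtuallyCyclic G) : VirtuallyCyclic G' := by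
  obtain ⟨C, hC, hCi⟩ := hG
  refine ⟨C.map (e : G →* G'), ?_, ⟨?_⟩⟩
  · exact isCyclic_of_surjective _ (C.equivMapOfInjective _ e.injective).surjective
  · rw [Subgroup.index_map_equiv]
    exact hCi.index_ne_zero

namespace Subgroup

variable {G : Type*} [Group G]

/-- If `g` generates `G` and `1 ≠ g ^ n ∈ K`, the cosets of `K` are represented by the `g ^ i`
with `0 ≤ i < |n|`. -/
theorem index_ne_zero_of_isCyclic [IsCyclic G] {K : Subgroup G} (hK : Infinite K) :
    K.index ≠ 0 := by
  obtain ⟨g, hg⟩ := IsCyclic.exists_generator (α := G)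
  obtain ⟨⟨k, hkK⟩, hk1⟩ := exists_ne (1 : K)
  obtain ⟨n, rfl⟩ := hg k
  have hn : n ≠ 0 := by rintro rfl; exact hk1 (Subtype.ext (zpow_zero g))
  rw [index_ne_zero_iff_finite]
  refine Finite.of_surjective (fun i : Fin n.natAbs => ((g ^ (i : ℤ) : G) : G ⧸ K)) fun q => ?_
  obtain ⟨x, rfl⟩ := QuotientGroup.mk_surjective q
  obtain ⟨m, rfl⟩ := hg x
  have hlt := Int.emod_lt m hn
  have hnonneg := Int.emod_nonneg m hn
  refine ⟨⟨(m % n).toNat, by omega⟩, ?_⟩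
  dsimp only
  rw [Int.toNat_of_nonneg hnonneg, QuotientGroup.eq, ← zpow_neg, ← zpow_add, Int.emod_def,
    neg_sub, sub_add_cancel, zpow_mul]
  exact zpow_mem hkK _

theorem infinite_subgroupOf_iff {H K : Subgroup G} :
    Infinite (K.subgroupOf H) ↔ Infinite ↥(K ⊓ H) := by
  rw [← inf_subgroupOf_right]
  exact (subgroupOfEquivOfLe inf_le_right).toEquiv.infinite_iff

theorem infinite_inf_of_relIndex_ne_zero {H K : Subgroup G} (hH : Infinite H)
    (hKH : K.relIndex H ≠ 0) : Infinite ↥(K ⊓ H) := by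
  rw [← infinite_subgroupOf_iff, ← not_finite_iff_infinite]
  intro hfin
  have : (K.subgroupOf H).FiniteIndex := ⟨hKH⟩
  have := (finite_iff_finite_and_finiteIndex (K.subgroupOf H)).mpr ⟨hfin, this⟩
  exact not_finite H

end Subgroup

theorem VirtuallyCyclic.index_ne_zero_of_infinite {G : Type*} [Group G] (hG : VirtuallyCyclic G)
    {K : Subgroup G} (hK : Infinite K) : K.index ≠ 0 := by
  obtain ⟨C, hC, ⟨hCi⟩⟩ := hG
  have hCK : Infinite ↥(C ⊓ K) :=
    Subgroup.infinite_inf_of_relIndex_ne_zero hK (mt C.index_eq_zero_of_relIndex_eq_zero hCi)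
  have hKC : K.relIndex C ≠ 0 :=
    Subgroup.index_ne_zero_of_isCyclic (Subgroup.infinite_subgroupOf_iff.mpr (inf_comm C K ▸ hCK))
  rw [← Subgroup.relIndex_top_right] at hCi ⊢
  exact Subgroup.relIndex_ne_zero_trans hKC hCi

theorem Subgroup.relIndex_ne_zero_of_infinite_inf {G : Type*} [Group G] {H K : Subgroup G}
    (hH : VirtuallyCyclic H) (hKH : Infinite ↥(K ⊓ H)) : K.relIndex H ≠ 0 :=
  hH.index_ne_zero_of_infinite (infinite_subgroupOf_iff.mpr hKH)

theorem Subgroup.commensurable_iff_infinite_inf {G : Type*} [Group G] {H K : Subgroup G}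
    (hinf : Infinite H) (hH : VirtuallyCyclic H) (hK : VirtuallyCyclic K) :
    Commensurable H K ↔ Infinite ↥(H ⊓ K) := by
  refine ⟨fun hHK => inf_comm K H ▸ infinite_inf_of_relIndex_ne_zero hinf hHK.2,
    fun hHK => ⟨?_, ?_⟩⟩
  · exact relIndex_ne_zero_of_infinite_inf hK hHK
  · exact relIndex_ne_zero_of_infinite_inf hH (inf_comm H K ▸ hHK)

/-- For an infinite virtually cyclic subgroup `H` of `Γ`, the set
`N_Γ[H] = {g ∈ Γ : H ∩ gHg⁻¹ is infinite}` is a subgroup of `Γ` containing `H`. -/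
theorem commensurator_is_subgroup_containing
    {Γ : Type*} [Group Γ] (H : Subgroup Γ)
    (hinf : Infinite H) (hvc : VirtuallyCyclic H) :
    ∃ N : Subgroup Γ,
      (∀ g : Γ, g ∈ N ↔ Infinite ↥(H ⊓ conjSubgroup g H)) ∧ H ≤ N := by
  refine ⟨Subgroup.Commensurable.commensurator H, fun g => ?_, fun h hh => ?_⟩
  · have hconj : conjSubgroup g H = ConjAct.toConjAct g • H := rfl
    have hvc' : VirtuallyCyclic ↥(conjSubgroup g H) :=
      hconj ▸ hvc.of_mulEquiv (H.equivSMul _)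
    rw [Subgroup.Commensurable.commensurator_mem_iff, Subgroup.Commensurable.comm, ← hconj,
      Subgroup.commensurable_iff_infinite_inf hinf hvc hvc']
  · rw [Subgroup.Commensurable.commensurator_mem_iff,
      Subgroup.conjAct_pointwise_smul_eq_self (Subgroup.le_normalizer hh)]
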